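/- arXiv:1105.2794 — 2 statements merged into one kernel-verified Lean document; each statement's English description precedes it below -/
import Mathlib

section
/- Fix an integer g ≥ 1, integers n_1,…,n_g ≥ 2, and set e_g = 1, e_{j-1} = n_j·e_j. Fix an index k with 1 ≤ k ≤ g and positive integers p_j, q_j for k ≤ j ≤ g with q_k/p_k ≥ 2/n_k. Define b_k = p_k + q_k, B_k = e_{k-1}·q_k, and recursively b_{j} = p_j·b_{j-1} + q_j, B_j = p_j·B_{j-1} + e_{j-1}·q_j for k < j ≤ g. Then b_k/B_k ≤ b_j/B_j for all k ≤ j ≤ g. -/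
/-!
Cross-multiplying, `b_k/B_k ≤ b_j/B_j` becomes `b_k B_j ≤ b_j B_k`, which propagates from `j - 1`
to `j` as soon as `b_k e_{j-1} ≤ B_k`: the new summands `p_j B_{j-1}` and `e_{j-1} q_j` of `B_j`
are matched by `p_j b_{j-1}` and `q_j` in `b_j`. Since `e` decreases, it suffices that
`b_k e_k ≤ B_k = n_k e_k q_k`, i.e. `p_k + q_k ≤ n_k q_k`, which follows from `2 p_k ≤ n_k q_k`
and `n_k ≥ 2`.
-/

theorem Nat.cast_div_le_cast_div_of_mul_le_mul {K : Type*} [Field K] [LinearOrder K]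
    [IsStrictOrderedRing K] {a b c d : ℕ} (hd : 0 < b → 0 < d) (h : a * d ≤ c * b) :
    (a : K) / b ≤ c / d := by
  rcases b.eq_zero_or_pos with rfl | hb
  · simpa using div_nonneg c.cast_nonneg d.cast_nonneg
  · rw [div_le_div_iff₀ (by exact_mod_cast hb) (by exact_mod_cast hd hb)]
    exact_mod_cast h

theorem monotoneOn_Icc_of_le_pred {β : Type*} [Preorder β] {f : ℕ → β} {k g : ℕ}
    (h : ∀ j, k < j → j ≤ g → f (j - 1) ≤ f j) : MonotoneOn f (Set.Icc k g) :=
  monotoneOn_of_le_succ Set.ordConnected_Icc fun a _ ha hsa => by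
    simpa using h (a + 1) (by simp at ha ⊢; omega) (by simpa using hsa.2)

theorem antitoneOn_Icc_of_pred_le {β : Type*} [Preorder β] {f : ℕ → β} {k g : ℕ}
    (h : ∀ j, k < j → j ≤ g → f j ≤ f (j - 1)) : AntitoneOn f (Set.Icc k g) :=
  monotoneOn_Icc_of_le_pred (β := βᵒᵈ) h

theorem add_le_mul_of_two_mul_le {p q n : ℕ} (hn : 2 ≤ n) (h : 2 * p ≤ n * q) :
    p + q ≤ n * q := by
  rcases le_total q p with hqp | hpq
  · omega
  · have := Nat.mul_le_mul_right q hn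
    omega

theorem mul_add_le_add_mul_of_le {b₀ B₀ b B p q E : ℕ} (hB : b₀ * B ≤ b * B₀) (hE : b₀ * E ≤ B₀) :
    b₀ * (p * B + E * q) ≤ (p * b + q) * B₀ :=
  calc b₀ * (p * B + E * q) = p * (b₀ * B) + (b₀ * E) * q := by ring
    _ ≤ p * (b * B₀) + B₀ * q := by gcongr
    _ = (p * b + q) * B₀ := by ring

theorem mul_le_mul_of_mediant_recurrence {k g : ℕ} {p q e b B : ℕ → ℕ}
    (hbe : ∀ j, k ≤ j → j < g → b k * e j ≤ B k)
    (hb : ∀ j, k < j → j ≤ g → b j = p j * b (j - 1) + q j)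
    (hB : ∀ j, k < j → j ≤ g → B j = p j * B (j - 1) + e (j - 1) * q j) :
    ∀ j, k ≤ j → j ≤ g → b k * B j ≤ b j * B k := by
  intro j hkj
  induction j, hkj using Nat.le_induction with
  | base => exact fun _ => le_rfl
  | succ j hkj ih =>
    intro hjg
    rw [hb (j + 1) (by omega) hjg, hB (j + 1) (by omega) hjg, Nat.add_sub_cancel]
    exact mul_add_le_add_mul_of_le (ih (by omega)) (hbe j hkj hjg)

theorem lemma_one_general (g k : ℕ) (hk : 1 ≤ k) (hkg : k ≤ g)
    (n e : ℕ → ℕ)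
    (hn : ∀ j, 1 ≤ j → j ≤ g → 2 ≤ n j)
    (he : ∀ j, 1 ≤ j → j ≤ g → e (j - 1) = n j * e j)
    (p q : ℕ → ℕ)
    (hp : ∀ j, k ≤ j → j ≤ g → 0 < p j)
    (hstart : (q k : ℚ) / p k ≥ 2 / n k)
    (b B : ℕ → ℕ)
    (hbk : b k = p k + q k) (hBk : B k = e (k - 1) * q k)
    (hb : ∀ j, k < j → j ≤ g → b j = p j * b (j - 1) + q j)
    (hB : ∀ j, k < j → j ≤ g → B j = p j * B (j - 1) + e (j - 1) * q j) :
    ∀ j, k ≤ j → j ≤ g → (b k : ℚ) / B k ≤ (b j : ℚ) / B j := by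
  intro j hkj hjg
  have hpk := hp k le_rfl hkg
  have hnk := hn k hk hkg
  have hpq : 2 * p k ≤ n k * q k := by
    rw [ge_iff_le, div_le_div_iff₀ (by norm_cast; omega) (by exact_mod_cast hpk),
      mul_comm (q k : ℚ)] at hstart
    exact_mod_cast hstart
  have e_anti : AntitoneOn e (Set.Icc k g) := antitoneOn_Icc_of_pred_le fun j hkj hjg => by
    rw [he j (by omega) hjg]
    exact Nat.le_mul_of_pos_left _ (by have := hn j (by omega) hjg; omega)
  have B_mono : MonotoneOn B (Set.Icc k g) := monotoneOn_Icc_of_le_pred fun j hkj hjg => by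
    rw [hB j hkj hjg]
    exact Nat.le_add_right_of_le (Nat.le_mul_of_pos_left _ (hp j hkj.le hjg))
  have hbe : ∀ j, k ≤ j → j < g → b k * e j ≤ B k := fun j hkj hjg =>
    calc b k * e j ≤ (p k + q k) * e k :=
          hbk ▸ Nat.mul_le_mul_left _ (e_anti ⟨le_rfl, hkg⟩ ⟨hkj, hjg.le⟩ hkj)
      _ ≤ n k * q k * e k := Nat.mul_le_mul_right _ (add_le_mul_of_two_mul_le hnk hpq)
      _ = B k := by rw [hBk, he k hk hkg]; ring
  exact Nat.cast_div_le_cast_div_of_mul_le_mul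
    (fun hpos => hpos.trans_le (B_mono ⟨le_rfl, hkg⟩ ⟨hkj, hjg⟩ hkj))
    (mul_le_mul_of_mediant_recurrence hbe hb hB j hkj hjg)

theorem lemma_one (g k : ℕ) (hg : 1 ≤ g) (hk : 1 ≤ k) (hkg : k ≤ g)
    (n e : ℕ → ℕ)
    (hn : ∀ j, 1 ≤ j → j ≤ g → 2 ≤ n j)
    (heg : e g = 1)
    (he : ∀ j, 1 ≤ j → j ≤ g → e (j - 1) = n j * e j)
    (p q : ℕ → ℕ)
    (hp : ∀ j, k ≤ j → j ≤ g → 0 < p j)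
    (hq : ∀ j, k ≤ j → j ≤ g → 0 < q j)
    (hstart : (q k : ℚ) / p k ≥ 2 / n k)
    (b B : ℕ → ℕ)
    (hbk : b k = p k + q k) (hBk : B k = e (k - 1) * q k)
    (hb : ∀ j, k < j → j ≤ g → b j = p j * b (j - 1) + q j)
    (hB : ∀ j, k < j → j ≤ g → B j = p j * B (j - 1) + e (j - 1) * q j) :
    ∀ j, k ≤ j → j ≤ g → (b k : ℚ) / B k ≤ (b j : ℚ) / B j :=
  lemma_one_general g k hk hkg n e hn he p q hp hstart b B hbk hBk hb hB
end

section
/- Fix an integer g ≥ 2, integers n_1,…,n_g ≥ 2, and set e_g = 1, e_{j-1} = n_j·e_j. Fix k with 1 ≤ k ≤ g−1. Set b_k = 1 + n_k, B_k = e_{k-1} (corresponding to first entry equal to 1/n_k). Let p_j, q_j be positive integers for k+1 ≤ j ≤ g and define recursively b_j = p_j·b_{j-1} + q_j, B_j = p_j·B_{j-1} + e_{j-1}·q_j. Then b_{k+1}/B_{k+1} ≤ b_j/B_j for all k+1 ≤ j ≤ g. -/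
/-!
Write `c = b (k+1)` and `C = B (k+1)`. Each later step
`b j / B j = (p j * b (j-1) + q j) / (p j * B (j-1) + e (j-1) * q j)` is a mediant of
`b (j-1) / B (j-1)` and `1 / e (j-1)`, so by induction `b j / B j ≥ c / C` as soon as
`c / C ≤ 1 / e (j-1)`. Since `e` decreases, this reduces to `c * e (k+1) ≤ C`, which is the
nonnegativity of `R (k+1) = B (k+1) - e (k+1) * b (k+1)`: it holds because
`e (k-1) = n k * n (k+1) * e (k+1)` and `1 + n k ≤ n k * n (k+1)`.
-/

section Descent

variable {g : ℕ} {n e : ℕ → ℕ}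

lemma pos_of_eq_mul_pred (hn : ∀ j, 1 ≤ j → j ≤ g → 0 < n j) (heg : 0 < e g)
    (he : ∀ j, 1 ≤ j → j ≤ g → e (j - 1) = n j * e j) {j : ℕ} (hj : j ≤ g) : 0 < e j := by
  induction hj using Nat.decreasingInduction with
  | self => exact heg
  | of_succ i hi ih =>
    rw [← Nat.add_sub_cancel i 1, he (i + 1) (by omega) hi]
    exact Nat.mul_pos (hn (i + 1) (by omega) hi) ih

lemma antitoneOn_of_eq_mul_pred (hn : ∀ j, 1 ≤ j → j ≤ g → 0 < n j)
    (he : ∀ j, 1 ≤ j → j ≤ g → e (j - 1) = n j * e j) : AntitoneOn e (Set.Iic g) := by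
  refine antitoneOn_of_succ_le Set.ordConnected_Iic fun i _ _ hi => ?_
  rw [Order.succ_eq_add_one, Set.mem_Iic] at hi
  have hstep := he (i + 1) (by omega) hi
  rw [Nat.add_sub_cancel] at hstep
  exact hstep ▸ Nat.le_mul_of_pos_left _ (hn (i + 1) (by omega) hi)

end Descent

/-- With `a = n k`, `c = n (k+1)` and `x = e (k+1)`, this is `e (k+1) * b (k+1) ≤ B (k+1)`. -/
lemma first_quotient_mul_le (a c x p q : ℕ) (ha : 1 ≤ a) (hc : 2 ≤ c) :
    (p * (1 + a) + q) * x ≤ p * (a * (c * x)) + c * x * q := by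
  have h_b : 1 + a ≤ a * c := by nlinarith
  have h_q : q ≤ c * q := Nat.le_mul_of_pos_left q (by omega)
  calc (p * (1 + a) + q) * x = p * (1 + a) * x + q * x := by ring
    _ ≤ p * (a * c) * x + c * q * x := by gcongr
    _ = p * (a * (c * x)) + c * x * q := by ring

lemma le_mediant_of_cross_mul_le {c C b B e p q : ℕ} (hB : c * B ≤ b * C) (he : c * e ≤ C) :
    c * (p * B + e * q) ≤ (p * b + q) * C :=
  calc c * (p * B + e * q) = p * (c * B) + (c * e) * q := by ring
    _ ≤ p * (b * C) + C * q := by gcongr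
    _ = (p * b + q) * C := by ring

lemma cross_mul_le_of_mediant_recursion {g m : ℕ} {e p q b B : ℕ → ℕ}
    (he : AntitoneOn e (Set.Iic g)) (hm : b m * e m ≤ B m)
    (hb : ∀ j, m + 1 ≤ j → j ≤ g → b j = p j * b (j - 1) + q j)
    (hB : ∀ j, m + 1 ≤ j → j ≤ g → B j = p j * B (j - 1) + e (j - 1) * q j) :
    ∀ j, m ≤ j → j ≤ g → b m * B j ≤ b j * B m := by
  intro j hj
  induction j, hj using Nat.le_induction with
  | base => exact fun _ => le_rfl
  | succ i hmi ih =>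
    intro hig
    have hei : b m * e i ≤ B m :=
      le_trans (Nat.mul_le_mul_left _ (he (by simp; omega) (by simp; omega) hmi)) hm
    rw [hb (i + 1) (by omega) hig, hB (i + 1) (by omega) hig, Nat.add_sub_cancel]
    exact le_mediant_of_cross_mul_le (ih (by omega)) hei

theorem lemma_two_general (g k : ℕ) (hk : 1 ≤ k) (hkg : k ≤ g - 1)
    (n e : ℕ → ℕ)
    (hn : ∀ j, 1 ≤ j → j ≤ g → 2 ≤ n j)
    (heg : e g = 1)
    (he : ∀ j, 1 ≤ j → j ≤ g → e (j - 1) = n j * e j)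
    (p q : ℕ → ℕ)
    (hq : ∀ j, k + 1 ≤ j → j ≤ g → 0 < q j)
    (b B : ℕ → ℕ)
    (hbk : b k = 1 + n k) (hBk : B k = e (k - 1))
    (hb : ∀ j, k + 1 ≤ j → j ≤ g → b j = p j * b (j - 1) + q j)
    (hB : ∀ j, k + 1 ≤ j → j ≤ g → B j = p j * B (j - 1) + e (j - 1) * q j) :
    ∀ j, k + 1 ≤ j → j ≤ g → (b (k + 1) : ℚ) / B (k + 1) ≤ (b j : ℚ) / B j := by
  have hn_pos : ∀ j, 1 ≤ j → j ≤ g → 0 < n j := fun j h₁ h₂ => by have := hn j h₁ h₂; omega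
  have he_pos : ∀ j, j ≤ g → 0 < e j := fun j => pos_of_eq_mul_pred hn_pos (by omega) he
  have hkey : b (k + 1) * e (k + 1) ≤ B (k + 1) := by
    have he_succ := he (k + 1) (by omega) (by omega)
    rw [Nat.add_sub_cancel] at he_succ
    rw [hb (k + 1) le_rfl (by omega), hB (k + 1) le_rfl (by omega), Nat.add_sub_cancel, hbk, hBk,
      he k hk (by omega), he_succ]
    exact first_quotient_mul_le _ _ _ _ _ (by have := hn k hk (by omega); omega)
      (hn (k + 1) (by omega) (by omega))
  have hcross := cross_mul_le_of_mediant_recursion (antitoneOn_of_eq_mul_pred hn_pos he) hkey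
    (fun j hj => hb j (by omega)) (fun j hj => hB j (by omega))
  have hB_pos : ∀ j, k + 1 ≤ j → j ≤ g → (0 : ℚ) < B j := fun j h₁ h₂ => by
    have := he_pos (j - 1) (by omega)
    have := hq j h₁ h₂
    rw [hB j h₁ h₂]
    positivity
  intro j hj hjg
  rw [div_le_div_iff₀ (hB_pos _ le_rfl (by omega)) (hB_pos j hj hjg)]
  exact_mod_cast hcross j hj hjg

theorem lemma_two (g k : ℕ) (hg : 2 ≤ g) (hk : 1 ≤ k) (hkg : k ≤ g - 1)
    (n e : ℕ → ℕ)
    (hn : ∀ j, 1 ≤ j → j ≤ g → 2 ≤ n j)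
    (heg : e g = 1)
    (he : ∀ j, 1 ≤ j → j ≤ g → e (j - 1) = n j * e j)
    (p q : ℕ → ℕ)
    (hp : ∀ j, k + 1 ≤ j → j ≤ g → 0 < p j)
    (hq : ∀ j, k + 1 ≤ j → j ≤ g → 0 < q j)
    (b B : ℕ → ℕ)
    (hbk : b k = 1 + n k) (hBk : B k = e (k - 1))
    (hb : ∀ j, k + 1 ≤ j → j ≤ g → b j = p j * b (j - 1) + q j)
    (hB : ∀ j, k + 1 ≤ j → j ≤ g → B j = p j * B (j - 1) + e (j - 1) * q j) :
    ∀ j, k + 1 ≤ j → j ≤ g → (b (k + 1) : ℚ) / B (k + 1) ≤ (b j : ℚ) / B j :=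
  lemma_two_general g k hk hkg n e hn heg he p q hq b B hbk hBk hb hB
end
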